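/- arXiv:2307.16702 — 3 statements merged into one kernel-verified Lean document; each statement's English description precedes it below -/
import Mathlib

section
/- Let A be an m×n real matrix, b ∈ ℝ^m, and suppose the linear system Ax = b is consistent. Then for any matrix S ∈ ℝ^{m×q} and any vector x̃ ∈ ℝ^n, we have Aᵀ S Sᵀ (A x̃ − b) ≠ 0 if and only if Sᵀ (A x̃ − b) ≠ 0. -/
/-! The residual `r = A x̃ - b` of a consistent system lies in the range of `A`, say `r = A y`.
Then `y ⬝ᵥ Aᵀ S Sᵀ r = ‖Sᵀ r‖²`, so `Aᵀ S Sᵀ r` can only vanish together with `Sᵀ r`. -/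

open Matrix

section

variable {l m n : Type*} [Fintype l] [Fintype m] [Fintype n]

theorem dotProduct_transpose_mulVec_mul_transpose_mulVec {R : Type*} [CommSemiring R]
    (A : Matrix m n R) (S : Matrix m l R) (y : n → R) :
    y ⬝ᵥ Aᵀ *ᵥ (S * Sᵀ) *ᵥ A *ᵥ y = Sᵀ *ᵥ A *ᵥ y ⬝ᵥ Sᵀ *ᵥ A *ᵥ y := by
  rw [dotProduct_transpose_mulVec, ← mulVec_mulVec, dotProduct_comm, dotProduct_mulVec,
    ← mulVec_transpose]

theorem transpose_mulVec_mul_transpose_mulVec_mulVec_eq_zero_iff {R : Type*} [CommRing R]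
    [LinearOrder R] [IsStrictOrderedRing R] (A : Matrix m n R) (S : Matrix m l R) (y : n → R) :
    Aᵀ *ᵥ (S * Sᵀ) *ᵥ A *ᵥ y = 0 ↔ Sᵀ *ᵥ A *ᵥ y = 0 := by
  refine ⟨fun h => ?_, fun h => by rw [← mulVec_mulVec, h, mulVec_zero, mulVec_zero]⟩
  have hnorm := dotProduct_transpose_mulVec_mul_transpose_mulVec A S y
  rwa [h, dotProduct_zero, eq_comm, dotProduct_self_eq_zero] at hnorm

end

theorem stmt0 {m n q : ℕ} (A : Matrix (Fin m) (Fin n) ℝ) (b : Fin m → ℝ)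
    (hcons : ∃ x : Fin n → ℝ, A.mulVec x = b)
    (S : Matrix (Fin m) (Fin q) ℝ) (xt : Fin n → ℝ) :
    A.transpose.mulVec ((S * S.transpose).mulVec (A.mulVec xt - b)) ≠ 0 ↔
      S.transpose.mulVec (A.mulVec xt - b) ≠ 0 := by
  obtain ⟨x, rfl⟩ := hcons
  rw [← mulVec_sub]
  exact not_congr (transpose_mulVec_mul_transpose_mulVec_mulVec_eq_zero_iff A S (xt - x))
end

section
/- Let S be an ℝⁿ-valued random variable on a probability space with E[S Sᵀ] = D positive definite. Then E[ S Sᵀ / ‖S‖²₂ ] (with the convention 0/0 = 0) is also positive definite. -/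
/-!
Pointwise, `(S ⬝ᵥ v)² / (S ⬝ᵥ S)` vanishes exactly where `S ⬝ᵥ v` does (if `S ⬝ᵥ S = 0` then
`S = 0`), and by Cauchy–Schwarz it is bounded by `v ⬝ᵥ v`, hence integrable. A nonnegative
integrand has positive integral iff its support has positive measure, and the two integrands
`(S ⬝ᵥ v)²` and `(S ⬝ᵥ v)² / (S ⬝ᵥ S)` have the same support.
-/

open Matrix MeasureTheory Function

section DotProduct

variable {ι : Type*} [Fintype ι]

lemma dotProduct_self_nonneg (x : ι → ℝ) : 0 ≤ x ⬝ᵥ x :=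
  Fintype.sum_nonneg fun i => mul_self_nonneg (x i)

lemma sq_dotProduct_le (x v : ι → ℝ) : (x ⬝ᵥ v) ^ 2 ≤ (x ⬝ᵥ x) * (v ⬝ᵥ v) := by
  simpa [dotProduct, sq] using Finset.sum_mul_sq_le_sq_mul_sq Finset.univ x v

lemma sq_dotProduct_div_dotProduct_self_nonneg (x v : ι → ℝ) :
    0 ≤ (x ⬝ᵥ v) ^ 2 / (x ⬝ᵥ x) :=
  div_nonneg (sq_nonneg _) (dotProduct_self_nonneg x)

lemma sq_dotProduct_div_dotProduct_self_le (x v : ι → ℝ) :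
    (x ⬝ᵥ v) ^ 2 / (x ⬝ᵥ x) ≤ v ⬝ᵥ v := by
  rcases (dotProduct_self_nonneg x).eq_or_lt with h | h
  · rw [← h, div_zero]
    exact dotProduct_self_nonneg v
  · rw [div_le_iff₀ h, mul_comm]
    exact sq_dotProduct_le x v

lemma sq_dotProduct_div_dotProduct_self_eq_zero_iff (x v : ι → ℝ) :
    (x ⬝ᵥ v) ^ 2 / (x ⬝ᵥ x) = 0 ↔ x ⬝ᵥ v = 0 := by
  rw [div_eq_zero_iff, dotProduct_self_eq_zero, pow_eq_zero_iff two_ne_zero]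
  constructor
  · rintro (h | rfl)
    exacts [h, zero_dotProduct v]
  · exact Or.inl

lemma dotProduct_self_eq_sum_sq_dotProduct_single [DecidableEq ι] (x : ι → ℝ) :
    x ⬝ᵥ x = ∑ i, (x ⬝ᵥ Pi.single i 1) ^ 2 := by
  simp only [dotProduct_single_one, sq]
  rfl

end DotProduct

section Integral

variable {α : Type*} [MeasurableSpace α] {μ : Measure α}

lemma integral_pos_of_support_subset {f g : α → ℝ} (hf : 0 ≤ f) (hfi : Integrable f μ)
    (hg : 0 ≤ g) (hgi : Integrable g μ) (hfg : support f ⊆ support g)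
    (h : 0 < ∫ a, f a ∂μ) : 0 < ∫ a, g a ∂μ := by
  rw [integral_pos_iff_support_of_nonneg hf hfi] at h
  rw [integral_pos_iff_support_of_nonneg hg hgi]
  exact h.trans_le (measure_mono hfg)

lemma integrable_sq_dotProduct_div_dotProduct_self [IsFiniteMeasure μ] {ι : Type*} [Fintype ι]
    {S : α → ι → ℝ} (hS : ∀ v, AEMeasurable (fun a => (S a ⬝ᵥ v) ^ 2) μ) (v : ι → ℝ) :
    Integrable (fun a => (S a ⬝ᵥ v) ^ 2 / (S a ⬝ᵥ S a)) μ := by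
  classical
  have hmeas : AEMeasurable (fun a => (S a ⬝ᵥ v) ^ 2 / (S a ⬝ᵥ S a)) μ := by
    simp_rw [dotProduct_self_eq_sum_sq_dotProduct_single (S _)]
    exact (hS v).div (Finset.aemeasurable_fun_sum _ fun i _ => hS (Pi.single i 1))
  refine .of_bound hmeas.aestronglyMeasurable (v ⬝ᵥ v) (.of_forall fun a => ?_)
  rw [Real.norm_of_nonneg (sq_dotProduct_div_dotProduct_self_nonneg _ _)]
  exact sq_dotProduct_div_dotProduct_self_le _ _

end Integral

theorem stmt7_general {n : ℕ} {Ω : Type*} [MeasureSpace Ω] [IsProbabilityMeasure (volume : Measure Ω)]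
    (S : Ω → Fin n → ℝ)
    (hint : ∀ v : Fin n → ℝ, Integrable (fun ω => (S ω ⬝ᵥ v) ^ 2) volume)
    (hpd : ∀ v : Fin n → ℝ, v ≠ 0 → 0 < ∫ ω, (S ω ⬝ᵥ v) ^ 2) :
    ∀ v : Fin n → ℝ, v ≠ 0 → 0 < ∫ ω, (S ω ⬝ᵥ v) ^ 2 / (S ω ⬝ᵥ S ω) := by
  intro v hv
  refine integral_pos_of_support_subset (fun ω => sq_nonneg _) (hint v)
    (fun ω => sq_dotProduct_div_dotProduct_self_nonneg _ _)
    (integrable_sq_dotProduct_div_dotProduct_self (fun w => (hint w).aemeasurable) v)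
    (fun ω hω => ?_) (hpd v hv)
  rw [mem_support, Ne, sq_dotProduct_div_dotProduct_self_eq_zero_iff]
  exact fun h => hω (by simp [h])

theorem stmt7 {n : ℕ} {Ω : Type*} [MeasureSpace Ω] [IsProbabilityMeasure (volume : Measure Ω)]
    (S : Ω → Fin n → ℝ) (hmeas : Measurable S)
    (hint : ∀ v : Fin n → ℝ, Integrable (fun ω => (S ω ⬝ᵥ v) ^ 2) volume)
    (hpd : ∀ v : Fin n → ℝ, v ≠ 0 → 0 < ∫ ω, (S ω ⬝ᵥ v) ^ 2) :
    ∀ v : Fin n → ℝ, v ≠ 0 → 0 < ∫ ω, (S ω ⬝ᵥ v) ^ 2 / (S ω ⬝ᵥ S ω) :=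
  stmt7_general S hint hpd
end

section
/- Let f : ℝⁿ → ℝ be γ-strongly convex with differentiable conjugate f*, let A ∈ ℝ^{m×n}, b = Ax̂. Given z^k with x^k = ∇f*(z^k), a matrix S ∈ ℝ^{m×q} with Sᵀ(Ax^k − b) ≠ 0, step-size α = (2 − ζ)·γ‖Sᵀ(Ax^k − b)‖²/‖Aᵀ S Sᵀ(Ax^k − b)‖² with ζ ∈ (0,2), and the update z^{k+1} = z^k − α Aᵀ S Sᵀ(Ax^k − b), x^{k+1} = ∇f*(z^{k+1}), the Bregman distances satisfy: D_{f,z^{k+1}}(x^{k+1}, x̂) ≤ D_{f,z^k}(x^k, x̂) − (ζ(2−ζ)/2)·(γ‖Sᵀ(Ax^k − b)‖⁴₂/‖Aᵀ S Sᵀ(Ax^k − b)‖²₂)·(1/‖Sᵀ(Ax^k − b)‖²₂)·‖Sᵀ(Ax^k − b)‖²₂, i.e. the decrease is (ζ(2−ζ)/2)·L·‖Sᵀ(Ax^k − b)‖²₂ with L = γ‖Sᵀ(Ax^k−b)‖²/‖AᵀSSᵀ(Ax^k−b)‖². -/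
/-!
Strong convexity of `f` at `xᵏ` (the dual form of the `(1/γ)`-smoothness of `f*`) bounds the new
Bregman distance by the old one plus a term that is quadratic in the step; the linear
part of that term is `-α ‖Sᵀ(Axᵏ - b)‖²` because `Ax̂ = b`, and the step size `α = (2 - ζ) L`
turns the sum into `-(ζ (2 - ζ) / 2) L ‖Sᵀ(Axᵏ - b)‖²`.
-/

open Matrix

/-- `D_{f,z}(x, y)`, for a subgradient `z` of `f` at `x`. -/
def bregmanDist {ι : Type*} [Fintype ι] (f : (ι → ℝ) → ℝ) (z x y : ι → ℝ) : ℝ :=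
  f y - f x - z ⬝ᵥ (y - x)

section

variable {ι : Type*} [Fintype ι]

lemma neg_dotProduct_self_div_le {γ : ℝ} (hγ : 0 < γ) (u d : ι → ℝ) :
    -((u ⬝ᵥ u) / (2 * γ)) ≤ γ / 2 * (d ⬝ᵥ d) + u ⬝ᵥ d := by
  have hsq : 0 ≤ (γ • d + u) ⬝ᵥ (γ • d + u) := by
    simpa using dotProduct_star_self_nonneg (γ • d + u)
  have hexpand : (γ • d + u) ⬝ᵥ (γ • d + u) =
      2 * γ * (γ / 2 * (d ⬝ᵥ d) + u ⬝ᵥ d + (u ⬝ᵥ u) / (2 * γ)) := by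
    simp only [add_dotProduct, dotProduct_add, smul_dotProduct, dotProduct_smul, smul_eq_mul,
      dotProduct_comm d u]
    field_simp
    ring
  rw [hexpand] at hsq
  have hquad := nonneg_of_mul_nonneg_right hsq (by positivity)
  linarith

lemma bregmanDist_sub_le {f : (ι → ℝ) → ℝ} {γ : ℝ} (hγ : 0 < γ) {x y z : ι → ℝ}
    (hsc : f y ≥ f x + z ⬝ᵥ (y - x) + γ / 2 * ((y - x) ⬝ᵥ (y - x))) (w xhat : ι → ℝ) :
    bregmanDist f (z - w) y xhat ≤
      bregmanDist f z x xhat + w ⬝ᵥ (xhat - x) + (w ⬝ᵥ w) / (2 * γ) := by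
  have hyoung := neg_dotProduct_self_div_le hγ w (y - x)
  have hsplit : xhat - y = (xhat - x) - (y - x) := by abel
  simp only [bregmanDist, sub_dotProduct, hsplit, dotProduct_sub] at hsc hyoung ⊢
  linarith

end

lemma transpose_mulVec_dotProduct_sub_of_mulVec_eq {m n q : Type*} [Fintype m] [Fintype n]
    [Fintype q] (A : Matrix m n ℝ) (S : Matrix m q ℝ) {b : m → ℝ} {xhat : n → ℝ} (x : n → ℝ)
    (hb : A *ᵥ xhat = b) :
    Aᵀ *ᵥ ((S * Sᵀ) *ᵥ (A *ᵥ x - b)) ⬝ᵥ (xhat - x) =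
      -(Sᵀ *ᵥ (A *ᵥ x - b) ⬝ᵥ Sᵀ *ᵥ (A *ᵥ x - b)) := by
  have hres : A *ᵥ (xhat - x) = -(A *ᵥ x - b) := by rw [mulVec_sub, hb]; abel
  rw [mulVec_transpose, ← dotProduct_mulVec, hres, dotProduct_neg, ← mulVec_mulVec,
    ← vecMul_transpose, ← dotProduct_mulVec]

lemma stepSize_gain (γ ζ L σ μ : ℝ) (hL : L = γ * σ / μ) :
    (2 - ζ) * L * σ - ((2 - ζ) * L) ^ 2 * μ / (2 * γ) = ζ * (2 - ζ) / 2 * L * σ := by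
  rcases eq_or_ne μ 0 with hμ | hμ
  · simp [hL, hμ]
  rcases eq_or_ne γ 0 with hγ | hγ
  · simp [hL, hγ]
  rw [hL]
  field_simp
  ring

theorem stmt9_general {m n q : ℕ} (f : (Fin n → ℝ) → ℝ) (γ : ℝ) (hγ : 0 < γ)
    (hsc : ∀ x y z : Fin n → ℝ, (∀ v, f v ≥ f x + z ⬝ᵥ (v - x)) →
      f y ≥ f x + z ⬝ᵥ (y - x) + γ / 2 * ((y - x) ⬝ᵥ (y - x)))
    (A : Matrix (Fin m) (Fin n) ℝ) (b : Fin m → ℝ) (xhat : Fin n → ℝ)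
    (hb : A.mulVec xhat = b)
    (zk xk : Fin n → ℝ) (hxk : ∀ v, f v ≥ f xk + zk ⬝ᵥ (v - xk))
    (S : Matrix (Fin m) (Fin q) ℝ)
    (r : Fin m → ℝ) (hr : r = A.mulVec xk - b)
    (ζ : ℝ)
    (L α : ℝ)
    (hL : L = γ * (S.transpose.mulVec r ⬝ᵥ S.transpose.mulVec r) /
      (A.transpose.mulVec ((S * S.transpose).mulVec r) ⬝ᵥ
        A.transpose.mulVec ((S * S.transpose).mulVec r)))
    (hα : α = (2 - ζ) * L)
    (zk1 xk1 : Fin n → ℝ)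
    (hz : zk1 = zk - α • A.transpose.mulVec ((S * S.transpose).mulVec r)) :
    f xhat - f xk1 - zk1 ⬝ᵥ (xhat - xk1) ≤
      f xhat - f xk - zk ⬝ᵥ (xhat - xk) -
        ζ * (2 - ζ) / 2 * L * (S.transpose.mulVec r ⬝ᵥ S.transpose.mulVec r) := by
  subst hr hz
  set u := Aᵀ *ᵥ ((S * Sᵀ) *ᵥ (A *ᵥ xk - b))
  have hstep := bregmanDist_sub_le hγ (hsc xk xk1 zk hxk) (α • u) xhat
  have hlin : u ⬝ᵥ (xhat - xk) = -(Sᵀ *ᵥ (A *ᵥ xk - b) ⬝ᵥ Sᵀ *ᵥ (A *ᵥ xk - b)) :=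
    transpose_mulVec_dotProduct_sub_of_mulVec_eq A S xk hb
  calc bregmanDist f (zk - α • u) xk1 xhat
      ≤ bregmanDist f zk xk xhat + α • u ⬝ᵥ (xhat - xk) + (α • u ⬝ᵥ α • u) / (2 * γ) := hstep
    _ = bregmanDist f zk xk xhat - ((2 - ζ) * L * (Sᵀ *ᵥ (A *ᵥ xk - b) ⬝ᵥ Sᵀ *ᵥ (A *ᵥ xk - b)) -
          ((2 - ζ) * L) ^ 2 * (u ⬝ᵥ u) / (2 * γ)) := by
      simp only [smul_dotProduct, dotProduct_smul, smul_eq_mul, hlin, hα]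
      ring
    _ = _ := by rw [stepSize_gain γ ζ L _ _ hL]; rfl

theorem stmt9 {m n q : ℕ} (f : (Fin n → ℝ) → ℝ) (γ : ℝ) (hγ : 0 < γ)
    (hsc : ∀ x y z : Fin n → ℝ, (∀ v, f v ≥ f x + z ⬝ᵥ (v - x)) →
      f y ≥ f x + z ⬝ᵥ (y - x) + γ / 2 * ((y - x) ⬝ᵥ (y - x)))
    (A : Matrix (Fin m) (Fin n) ℝ) (b : Fin m → ℝ) (xhat : Fin n → ℝ)
    (hb : A.mulVec xhat = b)
    (zk xk : Fin n → ℝ) (hxk : ∀ v, f v ≥ f xk + zk ⬝ᵥ (v - xk))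
    (S : Matrix (Fin m) (Fin q) ℝ)
    (r : Fin m → ℝ) (hr : r = A.mulVec xk - b)
    (hS : S.transpose.mulVec r ≠ 0)
    (ζ : ℝ) (hζ : ζ ∈ Set.Ioo (0 : ℝ) 2)
    (L α : ℝ)
    (hL : L = γ * (S.transpose.mulVec r ⬝ᵥ S.transpose.mulVec r) /
      (A.transpose.mulVec ((S * S.transpose).mulVec r) ⬝ᵥ
        A.transpose.mulVec ((S * S.transpose).mulVec r)))
    (hα : α = (2 - ζ) * L)
    (zk1 xk1 : Fin n → ℝ)
    (hz : zk1 = zk - α • A.transpose.mulVec ((S * S.transpose).mulVec r))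
    (hx1 : ∀ v, f v ≥ f xk1 + zk1 ⬝ᵥ (v - xk1)) :
    f xhat - f xk1 - zk1 ⬝ᵥ (xhat - xk1) ≤
      f xhat - f xk - zk ⬝ᵥ (xhat - xk) -
        ζ * (2 - ζ) / 2 * L * (S.transpose.mulVec r ⬝ᵥ S.transpose.mulVec r) :=
  stmt9_general f γ hγ hsc A b xhat hb zk xk hxk S r hr ζ L α hL hα zk1 xk1 hz
end
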